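/- Let s̃ ∈ ℝ^n, let M̃[i,j] be the mean of s̃ over indices [i,j], and let s̄ be the unique nondecreasing minimizer of ‖s̃ − t‖₂ over nondecreasing t ∈ ℝ^n. Then: (i) s̄[1] ≤ M̃[1,j] for all j ∈ [1,n], i.e., s̄[1] ≤ min_j M̃[1,j]; (ii) s̄[n] ≥ M̃[i,n] for all i ∈ [1,n], i.e., s̄[n] ≥ max_i M̃[i,n]; and (iii) for every k, min(s̄[k+1], max_{i ∈ [1,k]} M̃[i,k]) ≤ s̄[k] ≤ max(s̄[k−1], min_{j ∈ [k,n]} M̃[k,j]) (with the convention that the terms s̄[k+1] and s̄[k−1] are omitted when k = n or k = 1 respectively). -/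

import Mathlib

/-- `seqMean t i j` is the mean `M̃[i,j]` of the entries of `t` with indices in `[i,j]`. -/
noncomputable def seqMean {n : ℕ} (t : Fin n → ℝ) (i j : Fin n) : ℝ :=
  (∑ k ∈ Finset.Icc i j, t k) / (((j : ℕ) - (i : ℕ) + 1 : ℕ) : ℝ)

/-- `Msup t k = max_{i ∈ [1,k]} M̃[i,k]`. -/
noncomputable def Msup {n : ℕ} (t : Fin n → ℝ) (k : Fin n) : ℝ :=
  (Finset.univ.filter fun i => i ≤ k).sup' ⟨k, by simp⟩ fun i => seqMean t i k

/-- `Minf t k = min_{j ∈ [k,n]} M̃[k,j]`. -/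
noncomputable def Minf {n : ℕ} (t : Fin n → ℝ) (k : Fin n) : ℝ :=
  (Finset.univ.filter fun j => k ≤ j).inf' ⟨k, by simp⟩ fun j => seqMean t k j

/-! If `s̄` jumps strictly just before index `i`, lowering `s̄` by a small `ε` on `[i, j]` keeps it
nondecreasing, so optimality forces the residuals `s̃ - s̄` to have nonnegative sum on `[i, j]`;
then `M̃[i,j]` dominates the mean of `s̄` on `[i, j]`, hence `s̄[i]`. Symmetrically, a jump just
after `j` allows raising `s̄` on `[i, j]`. For each bound, either `s̄` does not jump at the
neighbouring index, and the `s̄[k ± 1]` term realises the min or max, or it does, and the block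
argument applies to every block starting or ending at `k`. -/

open Filter Topology Finset

section FirstOrder

variable {ι : Type*}

theorem sum_residual_mul_nonpos_of_minimizer [Fintype ι] {P : (ι → ℝ) → Prop} {x p d : ι → ℝ}
    (hmin : ∀ t, P t → ∑ k, (x k - p k) ^ 2 ≤ ∑ k, (x k - t k) ^ 2)
    (hd : ∀ᶠ ε in 𝓝[>] (0 : ℝ), P (p + ε • d)) :
    ∑ k, (x k - p k) * d k ≤ 0 := by
  set S := ∑ k, (x k - p k) * d k
  set D := ∑ k, d k ^ 2
  have hexpand : ∀ ε : ℝ, ∑ k, (x k - (p + ε • d) k) ^ 2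
      = ∑ k, (x k - p k) ^ 2 - ε * (2 * S - ε * D) := by
    intro ε
    simp only [S, D, Pi.add_apply, Pi.smul_apply, smul_eq_mul, mul_sum,
      ← sum_sub_distrib]
    exact sum_congr rfl fun k _ => by ring
  have hbound : ∀ᶠ ε in 𝓝[>] (0 : ℝ), 2 * S ≤ ε * D := by
    filter_upwards [hd, self_mem_nhdsWithin] with ε hε (hpos : 0 < ε)
    have := hmin _ hε
    rw [hexpand] at this
    nlinarith
  have hlim : Tendsto (fun ε : ℝ => ε * D) (𝓝[>] 0) (𝓝 0) := by
    simpa using (tendsto_id.mul_const D).mono_left (nhdsWithin_le_nhds (a := (0 : ℝ)))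
  linarith [ge_of_tendsto hlim hbound]

theorem eventually_monotone_add_smul [Preorder ι] [Finite ι] {f d : ι → ℝ} (hf : Monotone f)
    (hjump : ∀ a b, a ≤ b → d b < d a → f a < f b) :
    ∀ᶠ ε in 𝓝[>] (0 : ℝ), Monotone (f + ε • d) := by
  have hpair : ∀ a b, a ≤ b → ∀ᶠ ε in 𝓝[>] (0 : ℝ), f a + ε * d a ≤ f b + ε * d b := by
    intro a b hab
    rcases le_or_gt (d a) (d b) with hd | hd
    · filter_upwards [self_mem_nhdsWithin] with ε (hε : 0 < ε)
      have := hf hab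
      nlinarith
    · have hcont : Tendsto (fun ε : ℝ => f a + ε * d a - (f b + ε * d b)) (𝓝 0)
          (𝓝 (f a - f b)) :=
        (by fun_prop : Continuous fun ε : ℝ => f a + ε * d a - (f b + ε * d b)).tendsto' _ _
          (by simp)
      filter_upwards [nhdsWithin_le_nhds
        (hcont.eventually (gt_mem_nhds (sub_neg.2 (hjump a b hab hd))))] with ε hε
      linarith
  simp only [Monotone, eventually_all, Pi.add_apply, Pi.smul_apply, smul_eq_mul]
  exact hpair

end FirstOrder

section Means

variable {n : ℕ} {t : Fin n → ℝ} {i j : Fin n}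

theorem seqMean_eq_sum_div_card (hij : i ≤ j) :
    seqMean t i j = (∑ k ∈ Icc i j, t k) / #(Icc i j) := by
  rw [seqMean, Fin.card_Icc, Nat.sub_add_comm (Fin.le_def.1 hij)]

theorem le_seqMean_of_monotone (ht : Monotone t) (hij : i ≤ j) : t i ≤ seqMean t i j := by
  rw [seqMean_eq_sum_div_card hij, le_div_iff₀ (by simp [hij]), mul_comm, ← nsmul_eq_mul]
  exact card_nsmul_le_sum _ _ _ fun k hk => ht (mem_Icc.1 hk).1

theorem seqMean_le_of_monotone (ht : Monotone t) (hij : i ≤ j) : seqMean t i j ≤ t j := by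
  rw [seqMean_eq_sum_div_card hij, div_le_iff₀ (by simp [hij]), mul_comm, ← nsmul_eq_mul]
  exact sum_le_card_nsmul _ _ _ fun k hk => ht (mem_Icc.1 hk).2

theorem seqMean_le_seqMean {u : Fin n → ℝ} (h : ∑ k ∈ Icc i j, t k ≤ ∑ k ∈ Icc i j, u k) :
    seqMean t i j ≤ seqMean u i j :=
  div_le_div_of_nonneg_right h (Nat.cast_nonneg _)

theorem Minf_le_seqMean (hij : i ≤ j) : Minf t i ≤ seqMean t i j :=
  inf'_le (fun j => seqMean t i j) (by simpa using hij)

theorem seqMean_le_Msup (hij : i ≤ j) : seqMean t i j ≤ Msup t j :=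
  le_sup' (fun i => seqMean t i j) (by simpa using hij)

end Means

def IsIsotonicRegression {ι : Type*} [Fintype ι] [Preorder ι] (x p : ι → ℝ) : Prop :=
  Monotone p ∧ ∀ t, Monotone t → ∑ k, (x k - p k) ^ 2 ≤ ∑ k, (x k - t k) ^ 2

namespace IsIsotonicRegression

section LinearOrder

variable {ι : Type*} [Fintype ι] [LinearOrder ι] [LocallyFiniteOrder ι] {x p : ι → ℝ}

theorem sum_Icc_le_of_lt_left (hp : IsIsotonicRegression x p) {i : ι}
    (hgap : ∀ a < i, p a < p i) (j : ι) :
    ∑ k ∈ Icc i j, p k ≤ ∑ k ∈ Icc i j, x k := by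
  classical
  let d : ι → ℝ := fun k => if k ∈ Icc i j then -1 else 0
  have hadm : ∀ᶠ ε in 𝓝[>] (0 : ℝ), Monotone (p + ε • d) := by
    refine eventually_monotone_add_smul hp.1 fun a b hab hd => ?_
    simp only [d] at hd
    split_ifs at hd with hb ha ha <;> norm_num at hd
    have hai : a < i := by
      by_contra! hia
      exact ha (mem_Icc.2 ⟨hia, hab.trans (mem_Icc.1 hb).2⟩)
    exact (hgap a hai).trans_le (hp.1 (mem_Icc.1 hb).1)
  have h := sum_residual_mul_nonpos_of_minimizer hp.2 hadm
  simp only [d, mul_ite, mul_neg, mul_one, mul_zero] at h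
  rw [sum_ite_mem, univ_inter, sum_neg_distrib, sum_sub_distrib] at h
  linarith

theorem sum_Icc_le_of_lt_right (hp : IsIsotonicRegression x p) {j : ι}
    (hgap : ∀ b, j < b → p j < p b) (i : ι) :
    ∑ k ∈ Icc i j, x k ≤ ∑ k ∈ Icc i j, p k := by
  classical
  let d : ι → ℝ := fun k => if k ∈ Icc i j then 1 else 0
  have hadm : ∀ᶠ ε in 𝓝[>] (0 : ℝ), Monotone (p + ε • d) := by
    refine eventually_monotone_add_smul hp.1 fun a b hab hd => ?_
    simp only [d] at hd
    split_ifs at hd with hb ha ha <;> norm_num at hd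
    have hjb : j < b := by
      by_contra! hbj
      exact hb (mem_Icc.2 ⟨(mem_Icc.1 ha).1.trans hab, hbj⟩)
    exact (hp.1 (mem_Icc.1 ha).2).trans_lt (hgap b hjb)
  have h := sum_residual_mul_nonpos_of_minimizer hp.2 hadm
  simp only [d, mul_ite, mul_one, mul_zero] at h
  rw [sum_ite_mem, univ_inter, sum_sub_distrib] at h
  linarith

end LinearOrder

section Fin

variable {n : ℕ} {x p : Fin n → ℝ} {k : Fin n}

theorem le_Minf (hp : IsIsotonicRegression x p) (hgap : ∀ a < k, p a < p k) :
    p k ≤ Minf x k :=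
  le_inf' _ _ fun j hj => (le_seqMean_of_monotone hp.1 (mem_filter.1 hj).2).trans
    (seqMean_le_seqMean (hp.sum_Icc_le_of_lt_left hgap j))

theorem Msup_le (hp : IsIsotonicRegression x p) (hgap : ∀ b, k < b → p k < p b) :
    Msup x k ≤ p k :=
  sup'_le _ _ fun i hi => (seqMean_le_seqMean (hp.sum_Icc_le_of_lt_right hgap i)).trans
    (seqMean_le_of_monotone hp.1 (mem_filter.1 hi).2)

end Fin

end IsIsotonicRegression

/-- **Bounds satisfied by the minimum `L₂` nondecreasing solution.**
Let `s̄` be the unique nondecreasing minimizer of `‖s̃ − t‖₂` over nondecreasing `t`.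
Then: (i) `s̄[1] ≤ M̃[1,j]` for all `j`; (ii) `s̄[n] ≥ M̃[i,n]` for all `i`; and (iii)
for every `k`, `min(s̄[k+1], max_{i ≤ k} M̃[i,k]) ≤ s̄[k] ≤ max(s̄[k−1], min_{j ≥ k} M̃[k,j])`,
where the terms `s̄[k+1]` and `s̄[k−1]` are omitted when `k` is the last, resp. first,
index. -/
theorem isotonic_minimizer_bounds (n : ℕ) (hn : 0 < n) (st : Fin n → ℝ)
    (sbar : Fin n → ℝ)
    (hmono : Monotone sbar)
    (hmin : ∀ t : Fin n → ℝ, Monotone t →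
      ∑ k, (st k - sbar k) ^ 2 ≤ ∑ k, (st k - t k) ^ 2) :
    (∀ j : Fin n, sbar ⟨0, hn⟩ ≤ seqMean st ⟨0, hn⟩ j)
    ∧ (∀ i : Fin n, seqMean st i ⟨n - 1, by omega⟩ ≤ sbar ⟨n - 1, by omega⟩)
    ∧ (∀ k : Fin n,
        (∀ h : (k : ℕ) + 1 < n, min (sbar ⟨(k : ℕ) + 1, h⟩) (Msup st k) ≤ sbar k)
        ∧ ((k : ℕ) + 1 = n → Msup st k ≤ sbar k)
        ∧ (0 < (k : ℕ) →
            sbar k ≤ max (sbar ⟨(k : ℕ) - 1, lt_of_le_of_lt (Nat.sub_le _ _) k.isLt⟩)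
              (Minf st k))
        ∧ ((k : ℕ) = 0 → sbar k ≤ Minf st k)) := by
  have hp : IsIsotonicRegression st sbar := ⟨hmono, hmin⟩
  have hfirst {k : Fin n} (hk : (k : ℕ) = 0) : sbar k ≤ Minf st k :=
    hp.le_Minf fun a ha => by have := Fin.lt_def.1 ha; omega
  have hlast {k : Fin n} (hk : (k : ℕ) + 1 = n) : Msup st k ≤ sbar k :=
    hp.Msup_le fun b hb => by have := Fin.lt_def.1 hb; have := b.isLt; omega
  refine ⟨fun j => ?_, fun i => ?_, fun k => ⟨fun h => ?_, hlast, fun h => ?_, hfirst⟩⟩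
  · exact (hfirst rfl).trans (Minf_le_seqMean (Fin.le_def.2 (Nat.zero_le _)))
  · exact (seqMean_le_Msup (Fin.le_def.2 (Nat.le_sub_one_of_lt i.isLt))).trans
      (hlast (by simp only; omega))
  · rcases (hmono (show k ≤ ⟨k + 1, h⟩ from Fin.le_def.2 (Nat.le_succ k))).eq_or_lt
      with heq | hlt
    · exact min_le_of_left_le heq.ge
    · exact min_le_of_right_le (hp.Msup_le fun b hb =>
        hlt.trans_le (hmono (Fin.le_def.2 (Fin.lt_def.1 hb))))
  · rcases (hmono (show ⟨k - 1, _⟩ ≤ k from Fin.le_def.2 (Nat.sub_le k 1))).eq_or_lt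
      with heq | hlt
    · exact le_max_of_le_left heq.ge
    · exact le_max_of_le_right (hp.le_Minf fun a ha =>
        (hmono (Fin.le_def.2 (by have := Fin.lt_def.1 ha; simp only; omega))).trans_lt hlt)
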